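/- The assignment S ↦ rad_m(S) = ⋂_{M minimal} ann_S(M) is a Hoehnke radical: for every surjective semiring homomorphism f : S → T, f(rad_m(S)) ⊆ rad_m(T), and rad_m(S/rad_m(S)) is the diagonal congruence. -/
import Mathlib


universe u

section Defs

variable (S : Type u) [NonUnitalSemiring S]

structure IsRightAction (M : Type u) [AddCommMonoid M] (act : M → S → M) : Prop where
  add_act : ∀ (m₁ m₂ : M) (s : S), act (m₁ + m₂) s = act m₁ s + act m₂ s
  act_add : ∀ (m : M) (s₁ s₂ : S), act m (s₁ + s₂) = act m s₁ + act m s₂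
  act_mul : ∀ (m : M) (s₁ s₂ : S), act m (s₁ * s₂) = act (act m s₁) s₂
  act_zero : ∀ m : M, act m (0 : S) = 0
  zero_act : ∀ s : S, act (0 : M) s = 0

def IsSubsemimodule (M : Type u) [AddCommMonoid M] (act : M → S → M) (N : Set M) : Prop :=
  (0 : M) ∈ N ∧ (∀ x ∈ N, ∀ y ∈ N, x + y ∈ N) ∧ (∀ x ∈ N, ∀ s : S, act x s ∈ N)

def IsMinimal (M : Type u) [AddCommMonoid M] (act : M → S → M) : Prop :=
  (∃ (m : M) (s : S), act m s ≠ 0) ∧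
    ∀ N : Set M, IsSubsemimodule S M act N → N = {(0 : M)} ∨ N = Set.univ

def IsSemimoduleCong (M : Type u) [AddCommMonoid M] (act : M → S → M)
    (r : M → M → Prop) : Prop :=
  Equivalence r ∧ (∀ a b c : M, r a b → r (a + c) (b + c)) ∧
    (∀ (a b : M) (s : S), r a b → r (act a s) (act b s))

def IsSimple (M : Type u) [AddCommMonoid M] (act : M → S → M) : Prop :=
  IsMinimal S M act ∧ ∀ r : M → M → Prop, IsSemimoduleCong S M act r →
    (∀ a b, r a b → a = b) ∨ (∀ a b, r a b)

def IsRightCongruence (ρ : S → S → Prop) : Prop :=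
  Equivalence ρ ∧ (∀ a b c : S, ρ a b → ρ (a + c) (b + c)) ∧
    (∀ a b c : S, ρ a b → ρ (a * c) (b * c))

def IsCongruence (ρ : S → S → Prop) : Prop :=
  IsRightCongruence S ρ ∧ ∀ a b c : S, ρ a b → ρ (c * a) (c * b)

def IsRegularCong (ρ : S → S → Prop) : Prop := ∃ e : S, ∀ s : S, ρ (e * s) s

def IsRightIdeal (I : Set S) : Prop :=
  (0 : S) ∈ I ∧ (∀ x ∈ I, ∀ y ∈ I, x + y ∈ I) ∧ ∀ x ∈ I, ∀ s : S, x * s ∈ I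

def IsSaturated (ρ : S → S → Prop) (I : Set S) : Prop := ∀ s i : S, i ∈ I → ρ s i → s ∈ I

def IsMaximalSaturatedRightIdeal (ρ : S → S → Prop) (I : Set S) : Prop :=
  IsRightIdeal S I ∧ IsSaturated S ρ I ∧ I ≠ Set.univ ∧
    ∀ J : Set S, IsRightIdeal S J → IsSaturated S ρ J → I ⊆ J → J = I ∨ J = Set.univ

def zeroClass (ρ : S → S → Prop) : Set S := {s : S | ρ s 0}

def IsMRegular (ρ : S → S → Prop) : Prop :=
  IsRightCongruence S ρ ∧ IsRegularCong S ρ ∧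
    IsMaximalSaturatedRightIdeal S ρ (zeroClass S ρ)

def IsMaximalRightCongruence (ρ : S → S → Prop) : Prop :=
  IsRightCongruence S ρ ∧ (∃ a b : S, ¬ ρ a b) ∧
    ∀ τ : S → S → Prop, IsRightCongruence S τ → (∀ a b, ρ a b → τ a b) →
      (∀ a b, τ a b ↔ ρ a b) ∨ (∀ a b, τ a b)

/-- `φ : S → M` realizes `M` as the quotient right `S`-semimodule `S/μ`. -/
def IsQuotientModel (μ : S → S → Prop) (M : Type u) [AddCommMonoid M]
    (act : M → S → M) (φ : S → M) : Prop :=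
  Function.Surjective φ ∧ (∀ a b : S, φ (a + b) = φ a + φ b) ∧ φ 0 = 0 ∧
    (∀ (a : S) (s : S), φ (a * s) = act (φ a) s) ∧ ∀ a b : S, φ a = φ b ↔ μ a b

end Defs

def IsSRHom (R T : Type u) [NonUnitalSemiring R] [NonUnitalSemiring T]
    (f : R → T) : Prop :=
  (∀ a b : R, f (a + b) = f a + f b) ∧ (∀ a b : R, f (a * b) = f a * f b) ∧ f 0 = 0

/-- The m-radical of a semiring `T`: the intersection of the annihilators of
all minimal right `T`-semimodules (the full relation when none exist). -/
def radm (T : Type u) [NonUnitalSemiring T] : T → T → Prop :=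
  fun a b => ∀ (M : Type u) [AddCommMonoid M] (act : M → T → M),
    IsRightAction T M act → IsMinimal T M act → ∀ m : M, act m a = act m b

/-- `S ↦ rad_m(S)` is a Hoehnke radical: for every surjective
semiring homomorphism `f : S → T`, `f(rad_m(S)) ⊆ rad_m(T)`; and whenever `f`
moreover has kernel `rad_m(S)` (so `T ≅ S/rad_m(S)`), `rad_m(T)` is the
diagonal. -/
theorem radm_is_hoehnke {S T : Type u} [NonUnitalSemiring S] [NonUnitalSemiring T]
    (f : S → T) (hhom : IsSRHom S T f) (hsurj : Function.Surjective f) :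
    (∀ a b : S, radm S a b → radm T (f a) (f b)) ∧
      ((∀ a b : S, f a = f b ↔ radm S a b) →
        ∀ x y : T, radm T x y → x = y) := by
  obtain ⟨hfadd, hfmul, hf0⟩ := hhom
  constructor
  · intro a b hab M _ act hact hmin m
    -- pull back the T-action to an S-action via f
    have hactS : IsRightAction S M (fun m s => act m (f s)) := by
      constructor
      · intro m₁ m₂ s; exact hact.add_act m₁ m₂ (f s)
      · intro m s₁ s₂; rw [hfadd]; exact hact.act_add m (f s₁) (f s₂)
      · intro m s₁ s₂; rw [hfmul]; exact hact.act_mul m (f s₁) (f s₂)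
      · intro m; rw [hf0]; exact hact.act_zero m
      · intro s; exact hact.zero_act (f s)
    have hminS : IsMinimal S M (fun m s => act m (f s)) := by
      constructor
      · obtain ⟨m, t, hmt⟩ := hmin.1
        obtain ⟨s, rfl⟩ := hsurj t
        exact ⟨m, s, hmt⟩
      · intro N hN
        refine hmin.2 N ⟨hN.1, hN.2.1, ?_⟩
        intro x hx t
        obtain ⟨s, rfl⟩ := hsurj t
        exact hN.2.2 x hx s
    exact hab M (fun m s => act m (f s)) hactS hminS m
  · intro hker x y hxy
    obtain ⟨a, rfl⟩ := hsurj x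
    obtain ⟨b, rfl⟩ := hsurj y
    rw [hker]
    intro M _ act hact hmin m
    have hwd : ∀ s s' : S, f s = f s' → ∀ m : M, act m s = act m s' := by
      intro s s' h m
      exact (hker s s').mp h M act hact hmin m
    choose g hg using hsurj
    have key : ∀ (m : M) (s : S), act m (g (f s)) = act m s :=
      fun m s => hwd _ _ (hg (f s)) m
    have hactT : IsRightAction T M (fun m t => act m (g t)) := by
      constructor
      · intro m₁ m₂ t; exact hact.add_act m₁ m₂ (g t)
      · intro m t₁ t₂
        have : f (g (t₁ + t₂)) = f (g t₁ + g t₂) := by rw [hfadd, hg, hg, hg]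
        rw [hwd _ _ this m]; exact hact.act_add m (g t₁) (g t₂)
      · intro m t₁ t₂
        have : f (g (t₁ * t₂)) = f (g t₁ * g t₂) := by rw [hfmul, hg, hg, hg]
        rw [hwd _ _ this m]; exact hact.act_mul m (g t₁) (g t₂)
      · intro m
        have : f (g (0 : T)) = f 0 := by rw [hg, hf0]
        rw [hwd _ _ this m]; exact hact.act_zero m
      · intro t; exact hact.zero_act (g t)
    have hminT : IsMinimal T M (fun m t => act m (g t)) := by
      constructor
      · obtain ⟨m, s, hms⟩ := hmin.1
        exact ⟨m, f s, by simpa [key] using hms⟩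
      · intro N hN
        refine hmin.2 N ⟨hN.1, hN.2.1, ?_⟩
        intro x hx s
        have := hN.2.2 x hx (f s)
        simpa [key] using this
    have := hxy M (fun m t => act m (g t)) hactT hminT m
    simpa [key] using this
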